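/- arXiv:0903.0405 — 10 statements merged into one kernel-verified Lean document; each statement's English description precedes it below -/
import Mathlib

section
/- Let φ : ℝⁿ × ℝᵐ → ℝ be a function of two variables. Suppose that every y ∈ ℝᵐ is a maximizer of φ(x, ·) for some x ∈ ℝⁿ (i.e. for every y there exists x with φ(x, y') ≤ φ(x, y) for all y'), and that every x ∈ ℝⁿ is a maximizer of φ(·, y) for some y ∈ ℝᵐ. Then, with suprema and infima taken in the extended reals, inf_{x ∈ ℝⁿ} sup_{y ∈ ℝᵐ} φ(x, y) = inf_{y ∈ ℝᵐ} sup_{x ∈ ℝⁿ} φ(x, y). -/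
theorem iInf_iSup_le_iInf_iSup_of_argmax_surjective {α β γ : Type*} [CompleteLattice γ]
    (f : α → β → γ) (h : ∀ b, ∃ a, ∀ b', f a b' ≤ f a b) :
    ⨅ a, ⨆ b, f a b ≤ ⨅ b, ⨆ a, f a b :=
  le_iInf fun b ↦
    let ⟨a, ha⟩ := h b
    calc ⨅ a, ⨆ b, f a b ≤ ⨆ b', f a b' := iInf_le _ a
      _ ≤ f a b := iSup_le ha
      _ ≤ ⨆ a, f a b := le_iSup (f · b) a

/-- If every `y` is a maximizer of `φ x ·` for some `x`, and every `x` is a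
maximizer of `φ · y` for some `y`, then `inf_x sup_y φ(x,y) = inf_y sup_x φ(x,y)`
in the extended reals. -/
theorem minmax_eq_of_argmax_surjective (n m : ℕ)
    (φ : (Fin n → ℝ) → (Fin m → ℝ) → ℝ)
    (hY : ∀ y : Fin m → ℝ, ∃ x : Fin n → ℝ, ∀ y' : Fin m → ℝ, φ x y' ≤ φ x y)
    (hX : ∀ x : Fin n → ℝ, ∃ y : Fin m → ℝ, ∀ x' : Fin n → ℝ, φ x' y ≤ φ x y) :
    ⨅ x : Fin n → ℝ, ⨆ y : Fin m → ℝ, ((φ x y : ℝ) : EReal)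
      = ⨅ y : Fin m → ℝ, ⨆ x : Fin n → ℝ, ((φ x y : ℝ) : EReal) := by
  have hY' : ∀ y, ∃ x, ∀ y', (φ x y' : EReal) ≤ φ x y := fun y ↦
    (hY y).imp fun _ hx y' ↦ EReal.coe_le_coe_iff.2 (hx y')
  have hX' : ∀ x, ∃ y, ∀ x', (φ x' y : EReal) ≤ φ x y := fun x ↦
    (hX x).imp fun _ hy x' ↦ EReal.coe_le_coe_iff.2 (hy x')
  exact le_antisymm (iInf_iSup_le_iInf_iSup_of_argmax_surjective _ hY')
    (iInf_iSup_le_iInf_iSup_of_argmax_surjective (fun y x ↦ (φ x y : EReal)) hX')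
end

section
/- Semiconvex biconjugacy: Let P, Q be symmetric n×n real matrices and S an invertible n×n real matrix, and let φ(x, z) = ½xᵀPx + xᵀSz + ½zᵀQz for x, z ∈ ℝⁿ. Let f : ℝⁿ → ℝ be a (finite-valued) function such that x ↦ f(x) − ½xᵀPx is convex on ℝⁿ. Then for every x ∈ ℝⁿ, sup_{z ∈ ℝⁿ} [ φ(x, z) + inf_{y ∈ ℝⁿ} ( f(y) − φ(y, z) ) ] = f(x), where the inner infimum and outer supremum are taken in the extended reals. -/
open scoped Matrix

/-!
Convexity of `f − ½ xᵀPx` on all of `ℝⁿ` makes it continuous, so Hahn–Banach separation of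
`(x, f x)` from its open strict epigraph yields a subgradient `w` at `x`. Taking `z` with `S z = w`,
the function `y ↦ f y − φ(y, z)` is minimised at `x`, so the `z`-th term of the supremum is `f x`;
every other term is at most `f x` by taking `y = x` in the infimum.
-/

theorem ConvexOn.exists_subgradient_of_continuous {E : Type*} [TopologicalSpace E]
    [AddCommGroup E] [Module ℝ E] [IsTopologicalAddGroup E] [ContinuousSMul ℝ E] {g : E → ℝ}
    (hg : ConvexOn ℝ Set.univ g) (hcont : Continuous g) (x : E) :
    ∃ L : StrongDual ℝ E, ∀ y, g x + L (y - x) ≤ g y := by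
  have hconv : Convex ℝ {p : E × ℝ | g p.1 < p.2} := by
    simpa using hg.convex_strict_epigraph
  have hopen : IsOpen {p : E × ℝ | g p.1 < p.2} :=
    isOpen_lt (hcont.comp continuous_fst) continuous_snd
  obtain ⟨ℓ, hℓ⟩ := geometric_hahn_banach_open_point hconv hopen (x := (x, g x)) (lt_irrefl (g x))
  set a := ℓ (0, 1)
  have hℓ_apply : ∀ y t, ℓ (y, t) = ℓ (y, 0) + t * a := fun y t => by
    rw [show ((y, t) : E × ℝ) = (y, 0) + t • (0, 1) by simp, map_add, map_smul, smul_eq_mul]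
  have hsep : ∀ y t, g y < t → ℓ (y, 0) + t * a < ℓ (x, 0) + g x * a := fun y t ht => by
    rw [← hℓ_apply, ← hℓ_apply]
    exact hℓ (y, t) ht
  have ha : a < 0 := by nlinarith [hsep x (g x + 1) (by linarith)]
  refine ⟨(-a)⁻¹ • ℓ.comp (ContinuousLinearMap.inl ℝ E ℝ), fun y => ?_⟩
  refine le_of_forall_gt_imp_ge_of_dense fun t ht => ?_
  have hdiv : (ℓ (y, 0) - ℓ (x, 0)) / -a ≤ t - g x := by
    rw [div_le_iff₀ (by linarith)]
    linarith [hsep y t ht]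
  simp only [smul_apply, ContinuousLinearMap.comp_apply, ContinuousLinearMap.inl_apply, map_sub,
    smul_eq_mul, inv_mul_eq_div, ← sub_div]
  linarith

section SemiconvexDuality

variable {X Z : Type*} (φ : X → Z → ℝ)

noncomputable def semiconvexDual (f : X → ℝ) (z : Z) : EReal :=
  ⨅ y, ((f y - φ y z : ℝ) : EReal)

noncomputable def semiconvexInverse (g : Z → EReal) (x : X) : EReal :=
  ⨆ z, (φ x z : EReal) + g z

variable {φ}

theorem semiconvexInverse_semiconvexDual_le (f : X → ℝ) (x : X) :
    semiconvexInverse φ (semiconvexDual φ f) x ≤ f x :=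
  iSup_le fun z => calc
    (φ x z : EReal) + semiconvexDual φ f z ≤ (φ x z : EReal) + ((f x - φ x z : ℝ) : EReal) :=
      add_le_add_right (iInf_le _ x) _
    _ = f x := by rw [← EReal.coe_add, add_sub_cancel]

theorem semiconvexInverse_semiconvexDual_eq {f : X → ℝ} {x : X} {z : Z}
    (hz : ∀ y, f x - φ x z ≤ f y - φ y z) :
    semiconvexInverse φ (semiconvexDual φ f) x = f x := by
  refine le_antisymm (semiconvexInverse_semiconvexDual_le f x) (le_iSup_of_le z ?_)
  calc (f x : EReal) = (φ x z : EReal) + ((f x - φ x z : ℝ) : EReal) := by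
        rw [← EReal.coe_add, add_sub_cancel]
    _ ≤ (φ x z : EReal) + semiconvexDual φ f z :=
      add_le_add_right (le_iInf fun y => EReal.coe_le_coe_iff.mpr (hz y)) _

end SemiconvexDuality

theorem exists_forall_sub_le_sub_of_convexOn_sub {ι κ : Type*}
    [Fintype ι] [DecidableEq ι] [Fintype κ]
    {S : Matrix ι κ ℝ} (hS : Function.Surjective S.mulVec) {q : (ι → ℝ) → ℝ} {r : (κ → ℝ) → ℝ}
    {f : (ι → ℝ) → ℝ} (hf : ConvexOn ℝ Set.univ (fun x => f x - q x))
    {φ : (ι → ℝ) → (κ → ℝ) → ℝ} (hφ : ∀ x z, φ x z = q x + x ⬝ᵥ (S *ᵥ z) + r z) (x : ι → ℝ) :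
    ∃ z, ∀ y, f x - φ x z ≤ f y - φ y z := by
  obtain ⟨L, hL⟩ := hf.exists_subgradient_of_continuous
    (continuousOn_univ.mp (hf.continuousOn isOpen_univ)) x
  obtain ⟨z, hz⟩ := hS ((dotProductEquiv ℝ ι).symm L.toLinearMap)
  have hSz : ∀ v, v ⬝ᵥ (S *ᵥ z) = L v := fun v => by
    rw [hz, dotProduct_comm]
    exact LinearMap.congr_fun ((dotProductEquiv ℝ ι).apply_symm_apply L.toLinearMap) v
  refine ⟨z, fun y => ?_⟩
  have := hL y
  simp only [hφ, hSz, map_sub] at this ⊢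
  linarith

theorem semiconvex_biconjugacy_general (n : ℕ) (P S Q : Matrix (Fin n) (Fin n) ℝ)
    (hS : IsUnit S)
    (f : (Fin n → ℝ) → ℝ)
    (hf : ConvexOn ℝ Set.univ (fun x => f x - (1/2 : ℝ) * (x ⬝ᵥ (P *ᵥ x))))
    (φ : (Fin n → ℝ) → (Fin n → ℝ) → ℝ)
    (hφ : ∀ x z, φ x z =
      (1/2 : ℝ) * (x ⬝ᵥ (P *ᵥ x)) + x ⬝ᵥ (S *ᵥ z) + (1/2 : ℝ) * (z ⬝ᵥ (Q *ᵥ z)))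
    (x : Fin n → ℝ) :
    ⨆ z : Fin n → ℝ,
        (((φ x z : ℝ) : EReal) + ⨅ y : Fin n → ℝ, ((f y - φ y z : ℝ) : EReal))
      = ((f x : ℝ) : EReal) := by
  obtain ⟨z, hz⟩ :=
    exists_forall_sub_le_sub_of_convexOn_sub (Matrix.mulVec_surjective_iff_isUnit.mpr hS) hf hφ x
  exact semiconvexInverse_semiconvexDual_eq hz

/-- Semiconvex biconjugacy. For the bivariate quadratic kernel
`φ(x,z) = ½xᵀPx + xᵀSz + ½zᵀQz` with `P, Q` symmetric and `S` invertible, and any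
finite-valued `f` such that `x ↦ f x − ½xᵀPx` is convex, the semiconvex dual followed by
the inverse transform recovers `f`:
`sup_z [φ(x,z) + inf_y (f y − φ(y,z))] = f x` (in the extended reals). -/
theorem semiconvex_biconjugacy (n : ℕ) (P S Q : Matrix (Fin n) (Fin n) ℝ)
    (hP : P.IsSymm) (hQ : Q.IsSymm) (hS : IsUnit S)
    (f : (Fin n → ℝ) → ℝ)
    (hf : ConvexOn ℝ Set.univ (fun x => f x - (1/2 : ℝ) * (x ⬝ᵥ (P *ᵥ x))))
    (φ : (Fin n → ℝ) → (Fin n → ℝ) → ℝ)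
    (hφ : ∀ x z, φ x z =
      (1/2 : ℝ) * (x ⬝ᵥ (P *ᵥ x)) + x ⬝ᵥ (S *ᵥ z) + (1/2 : ℝ) * (z ⬝ᵥ (Q *ᵥ z)))
    (x : Fin n → ℝ) :
    ⨆ z : Fin n → ℝ,
        (((φ x z : ℝ) : EReal) + ⨅ y : Fin n → ℝ, ((f y - φ y z : ℝ) : EReal))
      = ((f x : ℝ) : EReal) :=
  semiconvex_biconjugacy_general n P S Q hS f hf φ hφ x
end

section
/- Conserved quantity along optimal trajectories: Let A, C, Σ : ℝ → (n×n real matrices) and let P, S, Q : ℝ → (n×n real matrices) be differentiable on an interval I satisfying the bivariate differential Riccati system P'(t) = −(A(t)ᵀP(t) + P(t)A(t) + C(t) + P(t)Σ(t)P(t)), S'(t) = −(A(t) + Σ(t)P(t))ᵀS(t), Q'(t) = −S(t)ᵀΣ(t)S(t) for all t ∈ I. Fix z ∈ ℝⁿ and let x : ℝ → ℝⁿ be differentiable on I with x'(t) = (A(t) + Σ(t)P(t))x(t) + Σ(t)S(t)z. Then the function t ↦ S(t)ᵀx(t) + Q(t)z is constant on I; in particular S(t₂)ᵀx(t₂) +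 Q(t₂)z = S(t₁)ᵀx(t₁) + Q(t₁)z for all t₁, t₂ ∈ I. -/
open scoped Matrix

attribute [local instance] Matrix.normedAddCommGroup Matrix.normedSpace

/-!
Along a solution of the closed-loop equation, `d/dt (Sᵀx) = Ṡᵀx + Sᵀẋ = -Sᵀ(A + ΣP)x + Sᵀ(A + ΣP)x
+ SᵀΣSz = SᵀΣSz`, which is exactly cancelled by `d/dt (Qz) = -SᵀΣSz`.
-/

theorem Convex.eq_of_hasDerivWithinAt_zero {𝕜 G : Type*} [RCLike 𝕜] [NormedAddCommGroup G]
    [NormedSpace 𝕜 G] {f : 𝕜 → G} {s : Set 𝕜} (hs : Convex ℝ s)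
    (hf : ∀ x ∈ s, HasDerivWithinAt f 0 s x) {x y : 𝕜} (hx : x ∈ s) (hy : y ∈ s) :
    f x = f y := by
  have h := norm_image_sub_le_of_norm_hasDerivWithin_le hf (fun _ _ ↦ norm_zero.le) hs hy hx
  rw [zero_mul, norm_le_zero_iff, sub_eq_zero] at h
  exact h

section MatrixCalculus

variable {𝕜 : Type*} [NontriviallyNormedField 𝕜] [CompleteSpace 𝕜] {m n : Type*}
  [Fintype m] [Fintype n] {s : Set 𝕜} {t : 𝕜}

theorem HasDerivWithinAt.matrix_transpose {M : 𝕜 → Matrix m n 𝕜} {M' : Matrix m n 𝕜}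
    (hM : HasDerivWithinAt M M' s t) : HasDerivWithinAt (fun t ↦ (M t)ᵀ) M'ᵀ s t :=
  (Matrix.transposeLinearEquiv m n 𝕜 𝕜).toContinuousLinearEquiv.hasFDerivAt
    |>.comp_hasDerivWithinAt t hM

theorem HasDerivWithinAt.matrix_mulVec {M : 𝕜 → Matrix m n 𝕜} {v : 𝕜 → n → 𝕜}
    {M' : Matrix m n 𝕜} {v' : n → 𝕜} (hM : HasDerivWithinAt M M' s t)
    (hv : HasDerivWithinAt v v' s t) :
    HasDerivWithinAt (fun t ↦ M t *ᵥ v t) (M t *ᵥ v' + M' *ᵥ v t) s t := by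
  let B : Matrix m n 𝕜 →L[𝕜] (n → 𝕜) →L[𝕜] m → 𝕜 := LinearMap.toContinuousLinearMap
    (LinearMap.toContinuousLinearMap.toLinearMap ∘ₗ
      LinearMap.mk₂ 𝕜 (· *ᵥ ·) Matrix.add_mulVec Matrix.smul_mulVec Matrix.mulVec_add
        fun c M v ↦ M.mulVec_smul c v)
  exact B.hasDerivWithinAt_of_bilinear hM hv

end MatrixCalculus

theorem conserved_quantity_along_optimal_trajectories_general (n : ℕ)
    (A Sig P S Q : ℝ → Matrix (Fin n) (Fin n) ℝ)
    (I : Set ℝ) (hI : Convex ℝ I)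
    (hS : ∀ t ∈ I, HasDerivWithinAt S (-((A t + Sig t * P t)ᵀ * S t)) I t)
    (hQ : ∀ t ∈ I, HasDerivWithinAt Q (-((S t)ᵀ * Sig t * S t)) I t)
    (z : Fin n → ℝ) (x : ℝ → Fin n → ℝ)
    (hx : ∀ t ∈ I, HasDerivWithinAt x
      ((A t + Sig t * P t) *ᵥ x t + (Sig t * S t) *ᵥ z) I t)
    (t₁ t₂ : ℝ) (ht₁ : t₁ ∈ I) (ht₂ : t₂ ∈ I) :
    (S t₂)ᵀ *ᵥ x t₂ + Q t₂ *ᵥ z = (S t₁)ᵀ *ᵥ x t₁ + Q t₁ *ᵥ z := by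
  refine hI.eq_of_hasDerivWithinAt_zero (f := fun t ↦ (S t)ᵀ *ᵥ x t + Q t *ᵥ z)
    (fun t ht ↦ ?_) ht₂ ht₁
  have h := ((hS t ht).matrix_transpose.matrix_mulVec (hx t ht)).add
    ((hQ t ht).matrix_mulVec (hasDerivWithinAt_const t I z))
  refine h.congr_deriv ?_
  simp only [Matrix.mulVec_zero, Matrix.neg_mulVec, Matrix.transpose_neg,
    Matrix.transpose_mul, Matrix.transpose_transpose, Matrix.mulVec_add, Matrix.mulVec_mulVec,
    Matrix.mul_assoc]
  abel

/-- Conserved quantity along optimal trajectories. If `(P, S, Q)` solves the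
bivariate differential Riccati system on an interval `I` and `x` solves the optimal
closed-loop ODE `x' = (A + ΣP)x + ΣSz`, then `t ↦ S(t)ᵀ x(t) + Q(t) z` is constant on
`I`. -/
theorem conserved_quantity_along_optimal_trajectories (n : ℕ)
    (A C Sig P S Q : ℝ → Matrix (Fin n) (Fin n) ℝ)
    (I : Set ℝ) (hI : Convex ℝ I)
    (hP : ∀ t ∈ I, HasDerivWithinAt P
      (-((A t)ᵀ * P t + P t * A t + C t + P t * Sig t * P t)) I t)
    (hS : ∀ t ∈ I, HasDerivWithinAt S (-((A t + Sig t * P t)ᵀ * S t)) I t)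
    (hQ : ∀ t ∈ I, HasDerivWithinAt Q (-((S t)ᵀ * Sig t * S t)) I t)
    (z : Fin n → ℝ) (x : ℝ → Fin n → ℝ)
    (hx : ∀ t ∈ I, HasDerivWithinAt x
      ((A t + Sig t * P t) *ᵥ x t + (Sig t * S t) *ᵥ z) I t)
    (t₁ t₂ : ℝ) (ht₁ : t₁ ∈ I) (ht₂ : t₂ ∈ I) :
    (S t₂)ᵀ *ᵥ x t₂ + Q t₂ *ᵥ z = (S t₁)ᵀ *ᵥ x t₁ + Q t₁ *ᵥ z :=
  conserved_quantity_along_optimal_trajectories_general n A Sig P S Q I hI hS hQ z x hx t₁ t₂ ht₁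
    ht₂
end

section
/- Bivariate quadratic form of the max-plus fundamental kernel: Let P₁, Q₁, P₂, Q₂ be symmetric n×n real matrices and S₁, S₂ arbitrary n×n real matrices, with Q₁ − Q₂ positive definite. Define V₁(x, z) = ½xᵀP₁x + xᵀS₁z + ½zᵀQ₁z and V₂(y, z) = ½yᵀP₂y + yᵀS₂z + ½zᵀQ₂z. Then for all x, y ∈ ℝⁿ, the infimum over z ∈ ℝⁿ of V₁(x, z) − V₂(y, z) equals ½xᵀI₁₁x + xᵀI₁₂y + ½yᵀI₂₂y, where I₁₁ = P₁ − S₁(Q₁ − Q₂)⁻¹S₁ᵀ, I₁₂ = S₁(Q₁ − Q₂)⁻¹S₂ᵀ, I₂₂ = −P₂ − S₂(Q₁ − Q₂)⁻¹S₂ᵀ; moreover the infimum is attained at ẑ = (Q₁ − Q₂)⁻¹(S₂ᵀy − S₁ᵀx). -/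
open scoped Matrix

/-!
With `A = Q₁ - Q₂` and `b = S₂ᵀ y - S₁ᵀ x`, the difference `V₁ x z - V₂ y z` is the constant
`½ xᵀP₁x - ½ yᵀP₂y` plus the quadratic `½ zᵀAz - bᵀz` in `z`. Completing the square,
`zᵀAz - 2 bᵀz = (z - A⁻¹b)ᵀA(z - A⁻¹b) - bᵀA⁻¹b`, so for positive definite `A` this quadratic
is minimised at `A⁻¹b` with value `-½ bᵀA⁻¹b`; expanding `bᵀA⁻¹b` in `x` and `y` gives the
matrices `I₁₁`, `I₁₂`, `I₂₂`.
-/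

namespace Matrix

variable {ι 𝕜 : Type*} [Fintype ι]

section CommRing

variable [CommRing 𝕜]

lemma dotProduct_mulVec_eq_transpose_mulVec_dotProduct (M : Matrix ι ι 𝕜) (u v : ι → 𝕜) :
    u ⬝ᵥ (M *ᵥ v) = (Mᵀ *ᵥ u) ⬝ᵥ v := by
  rw [dotProduct_mulVec, mulVec_transpose]

lemma IsSymm.dotProduct_mulVec_comm {A : Matrix ι ι 𝕜} (hA : A.IsSymm) (u v : ι → 𝕜) :
    u ⬝ᵥ (A *ᵥ v) = v ⬝ᵥ (A *ᵥ u) := by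
  rw [dotProduct_mulVec_eq_transpose_mulVec_dotProduct, hA.eq, dotProduct_comm]

variable [DecidableEq ι]

lemma mulVec_nonsing_inv_mulVec {A : Matrix ι ι 𝕜} (hA : IsUnit A.det) (b : ι → 𝕜) :
    A *ᵥ (A⁻¹ *ᵥ b) = b := by
  rw [mulVec_mulVec, mul_nonsing_inv A hA, one_mulVec]

lemma IsSymm.dotProduct_mulVec_sub_two_mul_dotProduct {A : Matrix ι ι 𝕜} (hA : A.IsSymm)
    (hdet : IsUnit A.det) (b z : ι → 𝕜) :
    z ⬝ᵥ (A *ᵥ z) - 2 * (b ⬝ᵥ z)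
      = (z - A⁻¹ *ᵥ b) ⬝ᵥ (A *ᵥ (z - A⁻¹ *ᵥ b)) - b ⬝ᵥ (A⁻¹ *ᵥ b) := by
  have hb := mulVec_nonsing_inv_mulVec hdet b
  rw [mulVec_sub, sub_dotProduct, dotProduct_sub, dotProduct_sub, hb,
    hA.dotProduct_mulVec_comm (A⁻¹ *ᵥ b) z, hb, dotProduct_comm z b, dotProduct_comm _ b]
  ring

end CommRing

section Field

variable [Field 𝕜] [DecidableEq ι]

lemma half_dotProduct_mulVec_sub_dotProduct_nonsing_inv_mulVec [NeZero (2 : 𝕜)]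
    {A : Matrix ι ι 𝕜} (hdet : IsUnit A.det) (b : ι → 𝕜) :
    1 / 2 * ((A⁻¹ *ᵥ b) ⬝ᵥ (A *ᵥ (A⁻¹ *ᵥ b))) - b ⬝ᵥ (A⁻¹ *ᵥ b)
      = -(1 / 2 * (b ⬝ᵥ (A⁻¹ *ᵥ b))) := by
  rw [mulVec_nonsing_inv_mulVec hdet, dotProduct_comm _ b]
  field_simp
  ring

variable [LinearOrder 𝕜] [IsStrictOrderedRing 𝕜] [StarRing 𝕜] [TrivialStar 𝕜]

lemma PosDef.neg_half_dotProduct_inv_mulVec_le {A : Matrix ι ι 𝕜} (hA : A.PosDef)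
    (b z : ι → 𝕜) :
    -(1 / 2 * (b ⬝ᵥ (A⁻¹ *ᵥ b))) ≤ 1 / 2 * (z ⬝ᵥ (A *ᵥ z)) - b ⬝ᵥ z := by
  have hsq := (isHermitian_iff_isSymm.mp hA.isHermitian).dotProduct_mulVec_sub_two_mul_dotProduct
    ((isUnit_iff_isUnit_det A).mp hA.isUnit) b z
  have hnonneg := hA.posSemidef.dotProduct_mulVec_nonneg (z - A⁻¹ *ᵥ b)
  rw [star_trivial] at hnonneg
  linarith

end Field

end Matrix

open Matrix

section BivariateQuadratic

variable {ι 𝕜 : Type*} [Fintype ι] [Field 𝕜]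

def bivariateQuadratic (P S Q : Matrix ι ι 𝕜) (x z : ι → 𝕜) : 𝕜 :=
  1 / 2 * (x ⬝ᵥ (P *ᵥ x)) + x ⬝ᵥ (S *ᵥ z) + 1 / 2 * (z ⬝ᵥ (Q *ᵥ z))

lemma bivariateQuadratic_sub_bivariateQuadratic (P₁ S₁ Q₁ P₂ S₂ Q₂ : Matrix ι ι 𝕜)
    (x y z : ι → 𝕜) :
    bivariateQuadratic P₁ S₁ Q₁ x z - bivariateQuadratic P₂ S₂ Q₂ y z
      = (1 / 2 * (x ⬝ᵥ (P₁ *ᵥ x)) - 1 / 2 * (y ⬝ᵥ (P₂ *ᵥ y)))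
        + (1 / 2 * (z ⬝ᵥ ((Q₁ - Q₂) *ᵥ z)) - (S₂ᵀ *ᵥ y - S₁ᵀ *ᵥ x) ⬝ᵥ z) := by
  simp only [bivariateQuadratic, sub_mulVec, dotProduct_sub, sub_dotProduct,
    dotProduct_mulVec_eq_transpose_mulVec_dotProduct S₁ x,
    dotProduct_mulVec_eq_transpose_mulVec_dotProduct S₂ y]
  ring

lemma bivariateQuadratic_sub_mul_mul_transpose [NeZero (2 : 𝕜)] {M : Matrix ι ι 𝕜} (hM : M.IsSymm)
    (P₁ S₁ P₂ S₂ : Matrix ι ι 𝕜) (x y : ι → 𝕜) :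
    bivariateQuadratic (P₁ - S₁ * M * S₁ᵀ) (S₁ * M * S₂ᵀ) (-P₂ - S₂ * M * S₂ᵀ) x y
      = (1 / 2 * (x ⬝ᵥ (P₁ *ᵥ x)) - 1 / 2 * (y ⬝ᵥ (P₂ *ᵥ y)))
        + -(1 / 2 * ((S₂ᵀ *ᵥ y - S₁ᵀ *ᵥ x) ⬝ᵥ (M *ᵥ (S₂ᵀ *ᵥ y - S₁ᵀ *ᵥ x)))) := by
  simp only [bivariateQuadratic, sub_mulVec, neg_mulVec, ← mulVec_mulVec, dotProduct_sub,
    dotProduct_neg, mulVec_sub, sub_dotProduct,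
    dotProduct_mulVec_eq_transpose_mulVec_dotProduct S₁ x,
    dotProduct_mulVec_eq_transpose_mulVec_dotProduct S₂ y,
    hM.dotProduct_mulVec_comm (S₂ᵀ *ᵥ y) (S₁ᵀ *ᵥ x)]
  field_simp
  ring

end BivariateQuadratic

theorem maxplus_fundamental_kernel_biquadratic_general (n : ℕ)
    (P₁ Q₁ P₂ Q₂ S₁ S₂ : Matrix (Fin n) (Fin n) ℝ)
    (hpd : (Q₁ - Q₂).PosDef)
    (V₁ V₂ : (Fin n → ℝ) → (Fin n → ℝ) → ℝ)
    (hV₁ : ∀ x z, V₁ x z =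
      (1/2 : ℝ) * (x ⬝ᵥ (P₁ *ᵥ x)) + x ⬝ᵥ (S₁ *ᵥ z) + (1/2 : ℝ) * (z ⬝ᵥ (Q₁ *ᵥ z)))
    (hV₂ : ∀ y z, V₂ y z =
      (1/2 : ℝ) * (y ⬝ᵥ (P₂ *ᵥ y)) + y ⬝ᵥ (S₂ *ᵥ z) + (1/2 : ℝ) * (z ⬝ᵥ (Q₂ *ᵥ z)))
    (I₁₁ I₁₂ I₂₂ : Matrix (Fin n) (Fin n) ℝ)
    (hI₁₁ : I₁₁ = P₁ - S₁ * (Q₁ - Q₂)⁻¹ * S₁ᵀ)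
    (hI₁₂ : I₁₂ = S₁ * (Q₁ - Q₂)⁻¹ * S₂ᵀ)
    (hI₂₂ : I₂₂ = -P₂ - S₂ * (Q₁ - Q₂)⁻¹ * S₂ᵀ)
    (x y : Fin n → ℝ) :
    (∀ z : Fin n → ℝ,
        (1/2 : ℝ) * (x ⬝ᵥ (I₁₁ *ᵥ x)) + x ⬝ᵥ (I₁₂ *ᵥ y) + (1/2 : ℝ) * (y ⬝ᵥ (I₂₂ *ᵥ y))
          ≤ V₁ x z - V₂ y z) ∧
      V₁ x ((Q₁ - Q₂)⁻¹ *ᵥ (S₂ᵀ *ᵥ y - S₁ᵀ *ᵥ x))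
          - V₂ y ((Q₁ - Q₂)⁻¹ *ᵥ (S₂ᵀ *ᵥ y - S₁ᵀ *ᵥ x))
        = (1/2 : ℝ) * (x ⬝ᵥ (I₁₁ *ᵥ x)) + x ⬝ᵥ (I₁₂ *ᵥ y)
            + (1/2 : ℝ) * (y ⬝ᵥ (I₂₂ *ᵥ y)) := by
  have hV₁' : ∀ x z, V₁ x z = bivariateQuadratic P₁ S₁ Q₁ x z := hV₁
  have hV₂' : ∀ y z, V₂ y z = bivariateQuadratic P₂ S₂ Q₂ y z := hV₂
  have hkernel : (1/2 : ℝ) * (x ⬝ᵥ (I₁₁ *ᵥ x)) + x ⬝ᵥ (I₁₂ *ᵥ y)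
      + (1/2 : ℝ) * (y ⬝ᵥ (I₂₂ *ᵥ y)) = bivariateQuadratic I₁₁ I₁₂ I₂₂ x y := rfl
  have hinv_symm : (Q₁ - Q₂)⁻¹.IsSymm := isHermitian_iff_isSymm.mp hpd.inv.isHermitian
  have hdet : IsUnit (Q₁ - Q₂).det := (isUnit_iff_isUnit_det _).mp hpd.isUnit
  rw [hkernel, hI₁₁, hI₁₂, hI₂₂, bivariateQuadratic_sub_mul_mul_transpose hinv_symm]
  simp only [hV₁', hV₂', bivariateQuadratic_sub_bivariateQuadratic]
  exact ⟨fun z => add_le_add_right (hpd.neg_half_dotProduct_inv_mulVec_le _ z) _,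
    by rw [half_dotProduct_mulVec_sub_dotProduct_nonsing_inv_mulVec hdet]⟩

/-- Bivariate quadratic form of the max-plus fundamental kernel. With
`Q₁ − Q₂` positive definite, `inf_z [V₁(x,z) − V₂(y,z)] = ½xᵀI₁₁x + xᵀI₁₂y + ½yᵀI₂₂y`
with `I₁₁ = P₁ − S₁(Q₁−Q₂)⁻¹S₁ᵀ`, `I₁₂ = S₁(Q₁−Q₂)⁻¹S₂ᵀ`,
`I₂₂ = −P₂ − S₂(Q₁−Q₂)⁻¹S₂ᵀ`, attained at `ẑ = (Q₁−Q₂)⁻¹(S₂ᵀy − S₁ᵀx)`. -/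
theorem maxplus_fundamental_kernel_biquadratic (n : ℕ)
    (P₁ Q₁ P₂ Q₂ S₁ S₂ : Matrix (Fin n) (Fin n) ℝ)
    (hP₁ : P₁.IsSymm) (hQ₁ : Q₁.IsSymm) (hP₂ : P₂.IsSymm) (hQ₂ : Q₂.IsSymm)
    (hpd : (Q₁ - Q₂).PosDef)
    (V₁ V₂ : (Fin n → ℝ) → (Fin n → ℝ) → ℝ)
    (hV₁ : ∀ x z, V₁ x z =
      (1/2 : ℝ) * (x ⬝ᵥ (P₁ *ᵥ x)) + x ⬝ᵥ (S₁ *ᵥ z) + (1/2 : ℝ) * (z ⬝ᵥ (Q₁ *ᵥ z)))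
    (hV₂ : ∀ y z, V₂ y z =
      (1/2 : ℝ) * (y ⬝ᵥ (P₂ *ᵥ y)) + y ⬝ᵥ (S₂ *ᵥ z) + (1/2 : ℝ) * (z ⬝ᵥ (Q₂ *ᵥ z)))
    (I₁₁ I₁₂ I₂₂ : Matrix (Fin n) (Fin n) ℝ)
    (hI₁₁ : I₁₁ = P₁ - S₁ * (Q₁ - Q₂)⁻¹ * S₁ᵀ)
    (hI₁₂ : I₁₂ = S₁ * (Q₁ - Q₂)⁻¹ * S₂ᵀ)
    (hI₂₂ : I₂₂ = -P₂ - S₂ * (Q₁ - Q₂)⁻¹ * S₂ᵀ)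
    (x y : Fin n → ℝ) :
    (∀ z : Fin n → ℝ,
        (1/2 : ℝ) * (x ⬝ᵥ (I₁₁ *ᵥ x)) + x ⬝ᵥ (I₁₂ *ᵥ y) + (1/2 : ℝ) * (y ⬝ᵥ (I₂₂ *ᵥ y))
          ≤ V₁ x z - V₂ y z) ∧
      V₁ x ((Q₁ - Q₂)⁻¹ *ᵥ (S₂ᵀ *ᵥ y - S₁ᵀ *ᵥ x))
          - V₂ y ((Q₁ - Q₂)⁻¹ *ᵥ (S₂ᵀ *ᵥ y - S₁ᵀ *ᵥ x))
        = (1/2 : ℝ) * (x ⬝ᵥ (I₁₁ *ᵥ x)) + x ⬝ᵥ (I₁₂ *ᵥ y)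
            + (1/2 : ℝ) * (y ⬝ᵥ (I₂₂ *ᵥ y)) :=
  maxplus_fundamental_kernel_biquadratic_general n P₁ Q₁ P₂ Q₂ S₁ S₂ hpd V₁ V₂ hV₁ hV₂ I₁₁ I₁₂ I₂₂
    hI₁₁ hI₁₂ hI₂₂ x y
end

section
/- Alternate (blow-up free) propagation identity: Let P₁, Q₁, P₂, Q₂, p₂ be symmetric n×n real matrices and S₁, S₂ arbitrary n×n real matrices. Assume Q₁ − Q₂ is invertible, p₂ − P₂ is invertible, and define I₁₁ = P₁ − S₁(Q₁ − Q₂)⁻¹S₁ᵀ, I₁₂ = S₁(Q₁ − Q₂)⁻¹S₂ᵀ, I₂₂ = −P₂ − S₂(Q₁ − Q₂)⁻¹S₂ᵀ. If additionally p₂ + I₂₂ is invertible and W := Q₁ − Q₂ − S₂ᵀ(p₂ − P₂)⁻¹S₂ is invertible, then I₁₁ − I₁₂(p₂ + I₂₂)⁻¹I₁₂ᵀ = P₁ − S₁W⁻¹S₁ᵀ. -/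
/-!
With `M = (Q₁ - Q₂)⁻¹`, the matrix `p₂ + I₂₂ = (p₂ - P₂) - S₂ M S₂ᵀ` is the capacitance matrix of
the Woodbury identity for `W = M⁻¹ - S₂ᵀ (p₂ - P₂)⁻¹ S₂`, so `W⁻¹ = M + M S₂ᵀ (p₂ + I₂₂)⁻¹ S₂ M`.
Substituting this into `P₁ - S₁ W⁻¹ S₁ᵀ` and using `Mᵀ = M` gives the left-hand side term by term.
-/

open scoped Matrix

namespace Matrix

variable {m n α : Type*} [Fintype m] [Fintype n] [DecidableEq m] [DecidableEq n] [CommRing α]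

theorem sub_mul_inv_mul_inv_eq_add {A : Matrix n n α} {B : Matrix m m α}
    (U : Matrix n m α) (V : Matrix m n α) (hA : IsUnit A) (hB : IsUnit B)
    (hK : IsUnit (B - V * A⁻¹ * U)) :
    (A - U * B⁻¹ * V)⁻¹ = A⁻¹ + A⁻¹ * U * (B - V * A⁻¹ * U)⁻¹ * V * A⁻¹ := by
  have hsub : A - U * B⁻¹ * V = A + -U * B⁻¹ * V := by
    rw [Matrix.neg_mul, Matrix.neg_mul, sub_eq_add_neg]
  have hcapacitance : B⁻¹⁻¹ + V * A⁻¹ * -U = B - V * A⁻¹ * U := by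
    rw [nonsing_inv_nonsing_inv B ((isUnit_iff_isUnit_det B).mp hB),
      Matrix.mul_neg, sub_eq_add_neg]
  rw [hsub, add_mul_mul_inv_eq_sub A (-U) B⁻¹ V hA (isUnit_nonsing_inv_iff.mpr hB)
    (hcapacitance ▸ hK), hcapacitance]
  simp only [Matrix.mul_neg, Matrix.neg_mul, sub_neg_eq_add]

end Matrix

theorem alternate_propagation_identity_general (n : ℕ)
    (P₁ Q₁ P₂ Q₂ p₂ S₁ S₂ : Matrix (Fin n) (Fin n) ℝ)
    (hQ₁ : Q₁.IsSymm) (hQ₂ : Q₂.IsSymm)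
    (hQinv : IsUnit (Q₁ - Q₂)) (hpPinv : IsUnit (p₂ - P₂))
    (I₁₁ I₁₂ I₂₂ : Matrix (Fin n) (Fin n) ℝ)
    (hI₁₁ : I₁₁ = P₁ - S₁ * (Q₁ - Q₂)⁻¹ * S₁ᵀ)
    (hI₁₂ : I₁₂ = S₁ * (Q₁ - Q₂)⁻¹ * S₂ᵀ)
    (hI₂₂ : I₂₂ = -P₂ - S₂ * (Q₁ - Q₂)⁻¹ * S₂ᵀ)
    (hpIinv : IsUnit (p₂ + I₂₂))
    (W : Matrix (Fin n) (Fin n) ℝ)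
    (hW : W = Q₁ - Q₂ - S₂ᵀ * (p₂ - P₂)⁻¹ * S₂) :
    I₁₁ - I₁₂ * (p₂ + I₂₂)⁻¹ * I₁₂ᵀ = P₁ - S₁ * W⁻¹ * S₁ᵀ := by
  subst hI₁₁ hI₁₂ hI₂₂ hW
  have hcapacitance :
      p₂ + (-P₂ - S₂ * (Q₁ - Q₂)⁻¹ * S₂ᵀ) = p₂ - P₂ - S₂ * (Q₁ - Q₂)⁻¹ * S₂ᵀ := by abel
  have hM : ((Q₁ - Q₂)⁻¹)ᵀ = (Q₁ - Q₂)⁻¹ := (hQ₁.sub hQ₂).inv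
  rw [hcapacitance] at hpIinv ⊢
  rw [Matrix.sub_mul_inv_mul_inv_eq_add _ _ hQinv hpPinv hpIinv, Matrix.transpose_mul,
    Matrix.transpose_mul, hM, Matrix.transpose_transpose]
  noncomm_ring

/-- Alternate (blow-up free) propagation identity. With the max-plus
kernel matrices `I₁₁ = P₁ − S₁(Q₁−Q₂)⁻¹S₁ᵀ`, `I₁₂ = S₁(Q₁−Q₂)⁻¹S₂ᵀ`,
`I₂₂ = −P₂ − S₂(Q₁−Q₂)⁻¹S₂ᵀ`, and with the indicated matrices invertible,
`I₁₁ − I₁₂(p₂+I₂₂)⁻¹I₁₂ᵀ = P₁ − S₁(Q₁ − Q₂ − S₂ᵀ(p₂−P₂)⁻¹S₂)⁻¹S₁ᵀ`. -/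
theorem alternate_propagation_identity (n : ℕ)
    (P₁ Q₁ P₂ Q₂ p₂ S₁ S₂ : Matrix (Fin n) (Fin n) ℝ)
    (hP₁ : P₁.IsSymm) (hQ₁ : Q₁.IsSymm) (hP₂ : P₂.IsSymm) (hQ₂ : Q₂.IsSymm)
    (hp₂ : p₂.IsSymm)
    (hQinv : IsUnit (Q₁ - Q₂)) (hpPinv : IsUnit (p₂ - P₂))
    (I₁₁ I₁₂ I₂₂ : Matrix (Fin n) (Fin n) ℝ)
    (hI₁₁ : I₁₁ = P₁ - S₁ * (Q₁ - Q₂)⁻¹ * S₁ᵀ)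
    (hI₁₂ : I₁₂ = S₁ * (Q₁ - Q₂)⁻¹ * S₂ᵀ)
    (hI₂₂ : I₂₂ = -P₂ - S₂ * (Q₁ - Q₂)⁻¹ * S₂ᵀ)
    (hpIinv : IsUnit (p₂ + I₂₂))
    (W : Matrix (Fin n) (Fin n) ℝ)
    (hW : W = Q₁ - Q₂ - S₂ᵀ * (p₂ - P₂)⁻¹ * S₂)
    (hWinv : IsUnit W) :
    I₁₁ - I₁₂ * (p₂ + I₂₂)⁻¹ * I₁₂ᵀ = P₁ - S₁ * W⁻¹ * S₁ᵀ :=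
  alternate_propagation_identity_general n P₁ Q₁ P₂ Q₂ p₂ S₁ S₂ hQ₁ hQ₂ hQinv hpPinv I₁₁ I₁₂ I₂₂
    hI₁₁ hI₁₂ hI₂₂ hpIinv W hW
end

section
/- Kernel matching conditions and Hamiltonian similarity: Let A, Σ, C, Ā, Σ̄, C̄, P, S, Q be n×n real matrices with Σ, C, Σ̄, C̄, P, Q symmetric and S invertible. Define the 2n×2n block matrices K = [[S⁻¹P, −S⁻¹], [Sᵀ − QS⁻¹P, QS⁻¹]], H = [[A, Σ], [−C, −Aᵀ]], H̄ = [[Ā, Σ̄], [−C̄, −Āᵀ]]. Then (i) K is invertible with K⁻¹ = [[(S⁻¹)ᵀQ, (S⁻¹)ᵀ], [−S + P(S⁻¹)ᵀQ, P(S⁻¹)ᵀ]]; and (ii) the three matching conditions AᵀP + PA + C + PΣP = SΣ̄Sᵀ, (A + ΣP)ᵀS = S(−Ā + Σ̄Q), SᵀΣS = −ĀᵀQ − QĀ + C̄ + QΣ̄Q hold simultaneously if and only if KH = H̄K. -/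
/-!
The kernel factors as `K = L_Q J_S L_P` with the shears `L_P = [[1, 0], [-P, 1]]` and the
twist `J_S = [[0, -S⁻¹], [Sᵀ, 0]]`, all invertible. Each factor intertwines Hamiltonian
matrices: `L_P` turns the Hamiltonian of `(A, Σ, C)` into that of
`(A + ΣP, Σ, AᵀP + PA + C + PΣP)`, and `J_S` turns it into that of
`(-S⁻¹AᵀS, S⁻¹CS⁻ᵀ, SᵀΣS)`. Cancelling the invertible
factors, `KH = H̄K` becomes an equality of two Hamiltonian matrices, and the three free blocks
of that equality are the three matching conditions.
-/

open scoped Matrix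

namespace Matrix

variable {m R : Type*} [CommRing R]

def hamiltonian (A Sig C : Matrix m m R) : Matrix (m ⊕ m) (m ⊕ m) R :=
  fromBlocks A Sig (-C) (-Aᵀ)

theorem hamiltonian_inj {A Sig C A' Sig' C' : Matrix m m R} :
    hamiltonian A Sig C = hamiltonian A' Sig' C' ↔ A = A' ∧ Sig = Sig' ∧ C = C' := by
  simp only [hamiltonian, fromBlocks_inj, neg_inj]
  constructor
  · rintro ⟨hA, hSig, hC, -⟩
    exact ⟨hA, hSig, hC⟩
  · rintro ⟨rfl, rfl, rfl⟩
    simp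

variable [Fintype m] [DecidableEq m]

def lowerShear (P : Matrix m m R) : Matrix (m ⊕ m) (m ⊕ m) R :=
  fromBlocks 1 0 (-P) 1

theorem lowerShear_mul_lowerShear_neg (P : Matrix m m R) :
    lowerShear P * lowerShear (-P) = 1 := by
  simp [lowerShear, fromBlocks_multiply, ← fromBlocks_one]

theorem lowerShear_neg_mul_lowerShear (P : Matrix m m R) :
    lowerShear (-P) * lowerShear P = 1 := by
  simpa using lowerShear_mul_lowerShear_neg (-P)

theorem isUnit_lowerShear (P : Matrix m m R) : IsUnit (lowerShear P) :=
  .of_mul_eq_one _ (lowerShear_mul_lowerShear_neg P)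

theorem lowerShear_mul_hamiltonian {A Sig C P : Matrix m m R} (hSig : Sig.IsSymm)
    (hP : P.IsSymm) :
    lowerShear P * hamiltonian A Sig C =
      hamiltonian (A + Sig * P) Sig (Aᵀ * P + P * A + C + P * Sig * P) * lowerShear P := by
  simp only [lowerShear, hamiltonian, fromBlocks_multiply, fromBlocks_inj, transpose_add,
    transpose_mul, hSig.eq, hP.eq]
  refine ⟨?_, ?_, ?_, ?_⟩ <;> noncomm_ring

theorem hamiltonian_mul_lowerShear {A Sig C P : Matrix m m R} (hSig : Sig.IsSymm)
    (hP : P.IsSymm) :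
    hamiltonian A Sig C * lowerShear P =
      lowerShear P * hamiltonian (A - Sig * P) Sig (-(Aᵀ * P) - P * A + C + P * Sig * P) := by
  simp only [lowerShear, hamiltonian, fromBlocks_multiply, fromBlocks_inj, transpose_sub,
    transpose_mul, hSig.eq, hP.eq]
  refine ⟨?_, ?_, ?_, ?_⟩ <;> noncomm_ring

noncomputable def swapScale (S : Matrix m m R) : Matrix (m ⊕ m) (m ⊕ m) R :=
  fromBlocks 0 (-S⁻¹) Sᵀ 0

theorem swapScale_mul_fromBlocks {S : Matrix m m R} (hS : IsUnit S) :
    swapScale S * fromBlocks 0 S⁻¹ᵀ (-S) 0 = 1 := by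
  have := hS.invertible
  simp [swapScale, fromBlocks_multiply, ← fromBlocks_one, ← transpose_mul]

theorem fromBlocks_mul_swapScale {S : Matrix m m R} (hS : IsUnit S) :
    fromBlocks 0 S⁻¹ᵀ (-S) 0 * swapScale S = 1 := by
  have := hS.invertible
  simp [swapScale, fromBlocks_multiply, ← fromBlocks_one, ← transpose_mul]

theorem isUnit_swapScale {S : Matrix m m R} (hS : IsUnit S) : IsUnit (swapScale S) :=
  .of_mul_eq_one _ (swapScale_mul_fromBlocks hS)

theorem swapScale_mul_hamiltonian {S : Matrix m m R} (hS : IsUnit S) (A Sig C : Matrix m m R) :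
    swapScale S * hamiltonian A Sig C =
      hamiltonian (-(S⁻¹ * Aᵀ * S)) (S⁻¹ * C * S⁻¹ᵀ) (Sᵀ * Sig * S) * swapScale S := by
  have := hS.invertible
  simp only [swapScale, hamiltonian, fromBlocks_multiply, fromBlocks_inj, transpose_neg,
    transpose_mul, transpose_transpose]
  refine ⟨?_, ?_, ?_, ?_⟩ <;> simp [Matrix.mul_assoc, ← transpose_mul]

noncomputable def dualityKernel (P S Q : Matrix m m R) : Matrix (m ⊕ m) (m ⊕ m) R :=
  lowerShear Q * swapScale S * lowerShear P

noncomputable def dualityKernelInv (P S Q : Matrix m m R) : Matrix (m ⊕ m) (m ⊕ m) R :=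
  lowerShear (-P) * fromBlocks 0 S⁻¹ᵀ (-S) 0 * lowerShear (-Q)

theorem dualityKernel_eq_fromBlocks (P S Q : Matrix m m R) :
    dualityKernel P S Q = fromBlocks (S⁻¹ * P) (-S⁻¹) (Sᵀ - Q * S⁻¹ * P) (Q * S⁻¹) := by
  simp only [dualityKernel, lowerShear, swapScale, fromBlocks_multiply, fromBlocks_inj]
  refine ⟨?_, ?_, ?_, ?_⟩ <;> noncomm_ring

theorem dualityKernelInv_eq_fromBlocks (P S Q : Matrix m m R) :
    dualityKernelInv P S Q =
      fromBlocks (S⁻¹ᵀ * Q) S⁻¹ᵀ (-S + P * S⁻¹ᵀ * Q) (P * S⁻¹ᵀ) := by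
  simp only [dualityKernelInv, lowerShear, fromBlocks_multiply, fromBlocks_inj]
  refine ⟨?_, ?_, ?_, ?_⟩ <;> noncomm_ring

theorem dualityKernel_mul_dualityKernelInv {S : Matrix m m R} (hS : IsUnit S)
    (P Q : Matrix m m R) : dualityKernel P S Q * dualityKernelInv P S Q = 1 := by
  simp only [dualityKernel, dualityKernelInv, Matrix.mul_assoc,
    ← Matrix.mul_assoc (lowerShear P), lowerShear_mul_lowerShear_neg, Matrix.one_mul]
  simp [← Matrix.mul_assoc, swapScale_mul_fromBlocks hS, lowerShear_mul_lowerShear_neg]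

theorem dualityKernelInv_mul_dualityKernel {S : Matrix m m R} (hS : IsUnit S)
    (P Q : Matrix m m R) : dualityKernelInv P S Q * dualityKernel P S Q = 1 := by
  simp only [dualityKernel, dualityKernelInv, Matrix.mul_assoc,
    ← Matrix.mul_assoc (lowerShear (-Q)), lowerShear_neg_mul_lowerShear, Matrix.one_mul]
  simp [← Matrix.mul_assoc, fromBlocks_mul_swapScale hS, lowerShear_neg_mul_lowerShear]

theorem dualityKernel_mul_hamiltonian {A Sig C P S : Matrix m m R} (hSig : Sig.IsSymm)
    (hP : P.IsSymm) (hS : IsUnit S) (Q : Matrix m m R) :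
    dualityKernel P S Q * hamiltonian A Sig C =
      lowerShear Q * hamiltonian (-(S⁻¹ * (A + Sig * P)ᵀ * S))
        (S⁻¹ * (Aᵀ * P + P * A + C + P * Sig * P) * S⁻¹ᵀ) (Sᵀ * Sig * S) *
        (swapScale S * lowerShear P) := by
  rw [dualityKernel, Matrix.mul_assoc, lowerShear_mul_hamiltonian hSig hP, ← Matrix.mul_assoc,
    Matrix.mul_assoc (lowerShear Q), swapScale_mul_hamiltonian hS]
  simp only [Matrix.mul_assoc]

theorem hamiltonian_mul_dualityKernel {Abar Sigbar Cbar Q : Matrix m m R}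
    (hSigbar : Sigbar.IsSymm) (hQ : Q.IsSymm) (P S : Matrix m m R) :
    hamiltonian Abar Sigbar Cbar * dualityKernel P S Q =
      lowerShear Q * hamiltonian (Abar - Sigbar * Q) Sigbar
        (-(Abarᵀ * Q) - Q * Abar + Cbar + Q * Sigbar * Q) * (swapScale S * lowerShear P) := by
  rw [dualityKernel, ← Matrix.mul_assoc, ← Matrix.mul_assoc,
    hamiltonian_mul_lowerShear hSigbar hQ]
  simp only [Matrix.mul_assoc]

theorem dualityKernel_mul_hamiltonian_eq_iff {A Sig C Abar Sigbar Cbar P S Q : Matrix m m R}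
    (hSig : Sig.IsSymm) (hSigbar : Sigbar.IsSymm) (hP : P.IsSymm) (hQ : Q.IsSymm)
    (hS : IsUnit S) :
    dualityKernel P S Q * hamiltonian A Sig C =
        hamiltonian Abar Sigbar Cbar * dualityKernel P S Q ↔
      Aᵀ * P + P * A + C + P * Sig * P = S * Sigbar * Sᵀ ∧
        (A + Sig * P)ᵀ * S = S * (-Abar + Sigbar * Q) ∧
        Sᵀ * Sig * S = -(Abarᵀ * Q) - Q * Abar + Cbar + Q * Sigbar * Q := by
  have := hS.invertible
  have hT : IsUnit (swapScale S * lowerShear P) := (isUnit_swapScale hS).mul (isUnit_lowerShear P)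
  have hA : -(S⁻¹ * (A + Sig * P)ᵀ * S) = Abar - Sigbar * Q ↔
      (A + Sig * P)ᵀ * S = S * (-Abar + Sigbar * Q) := by
    rw [neg_eq_iff_eq_neg, neg_sub, sub_eq_neg_add, Matrix.mul_assoc,
      inv_mul_eq_iff_eq_mul_of_invertible]
  have hSigma : S⁻¹ * (Aᵀ * P + P * A + C + P * Sig * P) * S⁻¹ᵀ = Sigbar ↔
      Aᵀ * P + P * A + C + P * Sig * P = S * Sigbar * Sᵀ := by
    rw [transpose_nonsing_inv, mul_inv_eq_iff_eq_mul_of_invertible,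
      inv_mul_eq_iff_eq_mul_of_invertible, Matrix.mul_assoc S]
  rw [dualityKernel_mul_hamiltonian hSig hP hS, hamiltonian_mul_dualityKernel hSigbar hQ,
    hT.mul_left_inj, (isUnit_lowerShear Q).mul_right_inj, hamiltonian_inj, hA, hSigma,
    and_left_comm]

end Matrix

theorem kernel_matching_conditions_hamiltonian_general (n : ℕ)
    (A Sig C Abar Sigbar Cbar P S Q : Matrix (Fin n) (Fin n) ℝ)
    (hSig : Sig.IsSymm) (hSigbar : Sigbar.IsSymm)
    (hP : P.IsSymm) (hQ : Q.IsSymm) (hS : IsUnit S)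
    (K H Hbar Kinv : Matrix (Fin n ⊕ Fin n) (Fin n ⊕ Fin n) ℝ)
    (hK : K = Matrix.fromBlocks (S⁻¹ * P) (-S⁻¹) (Sᵀ - Q * S⁻¹ * P) (Q * S⁻¹))
    (hH : H = Matrix.fromBlocks A Sig (-C) (-Aᵀ))
    (hHbar : Hbar = Matrix.fromBlocks Abar Sigbar (-Cbar) (-Abarᵀ))
    (hKinv : Kinv = Matrix.fromBlocks ((S⁻¹)ᵀ * Q) (S⁻¹)ᵀ
      (-S + P * (S⁻¹)ᵀ * Q) (P * (S⁻¹)ᵀ)) :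
    (K * Kinv = 1 ∧ Kinv * K = 1) ∧
      ((Aᵀ * P + P * A + C + P * Sig * P = S * Sigbar * Sᵀ ∧
        (A + Sig * P)ᵀ * S = S * (-Abar + Sigbar * Q) ∧
        Sᵀ * Sig * S = -(Abarᵀ * Q) - Q * Abar + Cbar + Q * Sigbar * Q)
       ↔ K * H = Hbar * K) := by
  rw [← Matrix.dualityKernel_eq_fromBlocks] at hK
  rw [← Matrix.dualityKernelInv_eq_fromBlocks] at hKinv
  subst hK hKinv hH hHbar
  exact ⟨⟨Matrix.dualityKernel_mul_dualityKernelInv hS P Q,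
      Matrix.dualityKernelInv_mul_dualityKernel hS P Q⟩,
    (Matrix.dualityKernel_mul_hamiltonian_eq_iff hSig hSigbar hP hQ hS).symm⟩

/-- Kernel matching conditions and Hamiltonian similarity. With
`K = [[S⁻¹P, −S⁻¹], [Sᵀ − QS⁻¹P, QS⁻¹]]`, `H = [[A, Σ], [−C, −Aᵀ]]`,
`H̄ = [[Ā, Σ̄], [−C̄, −Āᵀ]]`: (i) `K` is invertible with the displayed inverse, and
(ii) the three matching conditions hold iff `KH = H̄K`. -/
theorem kernel_matching_conditions_hamiltonian (n : ℕ)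
    (A Sig C Abar Sigbar Cbar P S Q : Matrix (Fin n) (Fin n) ℝ)
    (hSig : Sig.IsSymm) (hC : C.IsSymm) (hSigbar : Sigbar.IsSymm) (hCbar : Cbar.IsSymm)
    (hP : P.IsSymm) (hQ : Q.IsSymm) (hS : IsUnit S)
    (K H Hbar Kinv : Matrix (Fin n ⊕ Fin n) (Fin n ⊕ Fin n) ℝ)
    (hK : K = Matrix.fromBlocks (S⁻¹ * P) (-S⁻¹) (Sᵀ - Q * S⁻¹ * P) (Q * S⁻¹))
    (hH : H = Matrix.fromBlocks A Sig (-C) (-Aᵀ))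
    (hHbar : Hbar = Matrix.fromBlocks Abar Sigbar (-Cbar) (-Abarᵀ))
    (hKinv : Kinv = Matrix.fromBlocks ((S⁻¹)ᵀ * Q) (S⁻¹)ᵀ
      (-S + P * (S⁻¹)ᵀ * Q) (P * (S⁻¹)ᵀ)) :
    (K * Kinv = 1 ∧ Kinv * K = 1) ∧
      ((Aᵀ * P + P * A + C + P * Sig * P = S * Sigbar * Sᵀ ∧
        (A + Sig * P)ᵀ * S = S * (-Abar + Sigbar * Q) ∧
        Sᵀ * Sig * S = -(Abarᵀ * Q) - Q * Abar + Cbar + Q * Sigbar * Q)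
       ↔ K * H = Hbar * K) :=
  kernel_matching_conditions_hamiltonian_general n A Sig C Abar Sigbar Cbar P S Q hSig hSigbar hP hQ
    hS K H Hbar Kinv hK hH hHbar hKinv
end

section
/- Radon / Davison–Maki representation: Let A, C, Σ : ℝ → (n×n real matrices), and let U, V : ℝ → (n×n real matrices) be differentiable on an interval I satisfying U'(t) = −A(t)U(t) − Σ(t)V(t) and V'(t) = C(t)U(t) + A(t)ᵀV(t), with U(t) invertible for every t ∈ I. Then p(t) := V(t)U(t)⁻¹ is differentiable on I and satisfies the differential Riccati equation p'(t) = A(t)ᵀp(t) + p(t)A(t) + C(t) + p(t)Σ(t)p(t) for all t ∈ I. -/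
open scoped Matrix

attribute [local instance] Matrix.normedAddCommGroup Matrix.normedSpace

/-!
Differentiating `U U⁻¹ = 1` gives `(U⁻¹)' = -U⁻¹ U' U⁻¹`. The product rule for `p = V U⁻¹` and the
Hamiltonian system then give `p' = (C U + Aᵀ V) U⁻¹ + p (A U + Σ V) U⁻¹`, which is the Riccati
right-hand side once `U U⁻¹ = 1` is used.
-/

open Filter Topology

variable {𝕜 : Type*} [NontriviallyNormedField 𝕜] {l m n : Type*} [Fintype l] [Fintype m] [Fintype n]
  {s : Set 𝕜} {x : 𝕜}

noncomputable def Matrix.mulCLM [CompleteSpace 𝕜] :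
    Matrix l m 𝕜 →L[𝕜] Matrix m n 𝕜 →L[𝕜] Matrix l n 𝕜 :=
  LinearMap.toContinuousLinearMap
    (LinearMap.toContinuousLinearMap.toLinearMap.comp (mulLinearMap 𝕜))

theorem HasDerivWithinAt.matrix_mul [CompleteSpace 𝕜] {f : 𝕜 → Matrix l m 𝕜}
    {g : 𝕜 → Matrix m n 𝕜} {f' : Matrix l m 𝕜} {g' : Matrix m n 𝕜}
    (hf : HasDerivWithinAt f f' s x) (hg : HasDerivWithinAt g g' s x) :
    HasDerivWithinAt (fun y => f y * g y) (f' * g x + f x * g') s x := by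
  rw [add_comm]
  exact Matrix.mulCLM.hasDerivWithinAt_of_bilinear hf hg

theorem HasDerivWithinAt.matrix_inv [DecidableEq m] {f : 𝕜 → Matrix m m 𝕜} {f' : Matrix m m 𝕜}
    (hf : HasDerivWithinAt f f' s x) (hx : IsUnit (f x)) :
    HasDerivWithinAt (fun y => (f y)⁻¹) (-((f x)⁻¹ * f' * (f x)⁻¹)) s x := by
  have hdet : (f x).det ≠ 0 := ((Matrix.isUnit_iff_isUnit_det _).mp hx).ne_zero
  have hdet_cont : ContinuousWithinAt (fun y => (f y).det) s x :=
    continuous_id.matrix_det.continuousAt.comp_continuousWithinAt hf.continuousWithinAt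
  have hinv_cont : ContinuousWithinAt (fun y => (f y)⁻¹) s x := by
    refine (continuousAt_matrix_inv _ ?_).comp_continuousWithinAt hf.continuousWithinAt
    rw [Ring.inverse_eq_inv']
    exact continuousAt_inv₀ hdet
  have hunit : ∀ᶠ y in 𝓝[s \ {x}] x, IsUnit (f y) :=
    nhdsWithin_mono _ Set.sdiff_subset ((hdet_cont.eventually_ne hdet).mono fun y hy =>
      (Matrix.isUnit_iff_isUnit_det _).mpr (isUnit_iff_ne_zero.mpr hy))
  -- `(f y)⁻¹ - (f x)⁻¹ = -(f y)⁻¹ (f y - f x) (f x)⁻¹` writes the difference quotient of the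
  -- inverse as a product of convergent factors.
  have hslope : ∀ᶠ y in 𝓝[s \ {x}] x,
      -((f y)⁻¹ * slope f x y * (f x)⁻¹) = slope (fun y => (f y)⁻¹) x y := by
    filter_upwards [hunit] with y hy
    rw [slope_def_module, slope_def_module, Matrix.inv_sub_inv (iff_of_true hy hx),
      ← neg_sub (f y), Matrix.mul_neg, Matrix.neg_mul, Matrix.mul_smul, Matrix.smul_mul, smul_neg]
  refine hasDerivWithinAt_iff_tendsto_slope.mpr (Tendsto.congr' hslope ?_)
  exact (((hinv_cont.mono Set.sdiff_subset).tendsto.mul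
    (hasDerivWithinAt_iff_tendsto_slope.mp hf)).mul_const _).neg

/-- Radon / Davison–Maki representation. If `(U, V)` solves the linear
Hamiltonian system `U' = −AU − ΣV`, `V' = CU + AᵀV` on `I` with `U t` invertible, then
`p = V U⁻¹` solves the differential Riccati equation
`p' = Aᵀp + pA + C + pΣp` on `I`. -/
theorem davison_maki_representation (n : ℕ)
    (A C Sig : ℝ → Matrix (Fin n) (Fin n) ℝ)
    (U V : ℝ → Matrix (Fin n) (Fin n) ℝ) (I : Set ℝ)
    (hU : ∀ t ∈ I, HasDerivWithinAt U (-(A t * U t) - Sig t * V t) I t)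
    (hV : ∀ t ∈ I, HasDerivWithinAt V (C t * U t + (A t)ᵀ * V t) I t)
    (hUinv : ∀ t ∈ I, IsUnit (U t)) :
    ∀ t ∈ I, HasDerivWithinAt (fun s => V s * (U s)⁻¹)
      ((A t)ᵀ * (V t * (U t)⁻¹) + (V t * (U t)⁻¹) * A t + C t
        + (V t * (U t)⁻¹) * Sig t * (V t * (U t)⁻¹)) I t := by
  intro t ht
  have hUU : U t * (U t)⁻¹ = 1 :=
    Matrix.mul_nonsing_inv _ ((Matrix.isUnit_iff_isUnit_det _).mp (hUinv t ht))
  convert (hV t ht).matrix_mul ((hU t ht).matrix_inv (hUinv t ht)) using 1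
  set W := (U t)⁻¹
  calc _ = C t * (U t * W) + (A t)ᵀ * (V t * W) + V t * W * A t * (U t * W)
        + V t * W * Sig t * (V t * W) := by rw [hUU]; noncomm_ring
    _ = _ := by noncomm_ring
end

section
/- Dual-space kernel formula: Let P₁, Q₁, P₂, Q₂ be symmetric n×n real matrices and S₁, S₂ arbitrary n×n real matrices, with P₁ − P₂ positive definite. Define φ₁(x, w) = ½xᵀP₁x + xᵀS₁w + ½wᵀQ₁w and φ₂(x, w) = ½xᵀP₂x + xᵀS₂w + ½wᵀQ₂w. Then for all y, z ∈ ℝⁿ, the infimum over x ∈ ℝⁿ of φ₁(x, y) − φ₂(x, z) equals ½zᵀB₁₁z + zᵀB₁₂y + ½yᵀB₂₂y, where B₁₁ = −S₂ᵀ(P₁ − P₂)⁻¹S₂ − Q₂, B₁₂ = S₂ᵀ(P₁ − P₂)⁻¹S₁, B₂₂ = −S₁ᵀ(P₁ − P₂)⁻¹S₁ + Q₁; the infimum is attained at x̂ = −(P₁ − P₂)⁻¹(S₁y − S₂z). -/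
open scoped Matrix

/-!
Writing `A = P₁ - P₂` and `c = S₁ y - S₂ z`, the difference `φ₁(x, y) - φ₂(x, z)` is
`½ xᵀA x + xᵀc` plus terms free of `x`. Completing the square,
`xᵀA x + 2 xᵀc = (x + A⁻¹c)ᵀA (x + A⁻¹c) - cᵀA⁻¹c`, and positive definiteness of `A` shows that
the minimum is `-½ cᵀA⁻¹c`, attained at `x = -A⁻¹c`. Expanding `cᵀA⁻¹c` gives the three blocks `B`.
-/

namespace Matrix

variable {k m n R : Type*} [Fintype k] [Fintype m] [Fintype n] [CommRing R]

lemma IsSymm.dotProduct_mulVec_comm_s16 {M : Matrix n n R} (hM : M.IsSymm) (a b : n → R) :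
    a ⬝ᵥ (M *ᵥ b) = b ⬝ᵥ (M *ᵥ a) := by
  rw [dotProduct_mulVec, ← mulVec_transpose, hM.eq, dotProduct_comm]

lemma dotProduct_transpose_mul_mul_mulVec (S : Matrix m n R) (M : Matrix m k R)
    (T : Matrix k n R) (a b : n → R) :
    a ⬝ᵥ ((Sᵀ * M * T) *ᵥ b) = (S *ᵥ a) ⬝ᵥ (M *ᵥ (T *ᵥ b)) := by
  rw [← mulVec_mulVec, ← mulVec_mulVec, dotProduct_mulVec, vecMul_transpose]

lemma IsSymm.dotProduct_sub_mulVec_sub {M : Matrix n n R} (hM : M.IsSymm) (u v : n → R) :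
    (u - v) ⬝ᵥ (M *ᵥ (u - v)) = u ⬝ᵥ (M *ᵥ u) - 2 * (v ⬝ᵥ (M *ᵥ u)) + v ⬝ᵥ (M *ᵥ v) := by
  simp only [mulVec_sub, dotProduct_sub, sub_dotProduct, hM.dotProduct_mulVec_comm_s16 u v]
  ring

variable [DecidableEq n]

lemma IsSymm.dotProduct_mulVec_add_two_mul_eq {A : Matrix n n R} (hA : A.IsSymm)
    (hdet : IsUnit A.det) (x c : n → R) :
    x ⬝ᵥ (A *ᵥ x) + 2 * (x ⬝ᵥ c)
      = (x + A⁻¹ *ᵥ c) ⬝ᵥ (A *ᵥ (x + A⁻¹ *ᵥ c)) - c ⬝ᵥ (A⁻¹ *ᵥ c) := by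
  have hAb : A *ᵥ (A⁻¹ *ᵥ c) = c := by
    rw [mulVec_mulVec, mul_nonsing_inv _ hdet, one_mulVec]
  simp only [mulVec_add, dotProduct_add, add_dotProduct, hAb,
    hA.dotProduct_mulVec_comm_s16 (A⁻¹ *ᵥ c) x, dotProduct_comm c]
  ring

lemma IsSymm.dotProduct_mulVec_neg_inv_mulVec {A : Matrix n n R} (hA : A.IsSymm)
    (hdet : IsUnit A.det) (c : n → R) :
    (-(A⁻¹ *ᵥ c)) ⬝ᵥ (A *ᵥ -(A⁻¹ *ᵥ c)) + 2 * ((-(A⁻¹ *ᵥ c)) ⬝ᵥ c) = -(c ⬝ᵥ (A⁻¹ *ᵥ c)) := by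
  rw [hA.dotProduct_mulVec_add_two_mul_eq hdet, neg_add_cancel, zero_dotProduct, zero_sub]

lemma PosDef.neg_dotProduct_inv_mulVec_le {A : Matrix n n ℝ} (hA : A.PosDef) (c x : n → ℝ) :
    -(c ⬝ᵥ (A⁻¹ *ᵥ c)) ≤ x ⬝ᵥ (A *ᵥ x) + 2 * (x ⬝ᵥ c) := by
  have hsq := hA.posSemidef.dotProduct_mulVec_nonneg (x + A⁻¹ *ᵥ c)
  rw [star_trivial] at hsq
  rw [(isHermitian_iff_isSymm.mp hA.isHermitian).dotProduct_mulVec_add_two_mul_eq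
    ((isUnit_iff_isUnit_det A).mp hA.isUnit)]
  linarith

end Matrix

open Matrix in
theorem dual_space_kernel_formula_general (n : ℕ)
    (P₁ Q₁ P₂ Q₂ S₁ S₂ : Matrix (Fin n) (Fin n) ℝ)
    (hpd : (P₁ - P₂).PosDef)
    (φ₁ φ₂ : (Fin n → ℝ) → (Fin n → ℝ) → ℝ)
    (hφ₁ : ∀ x w, φ₁ x w =
      (1/2 : ℝ) * (x ⬝ᵥ (P₁ *ᵥ x)) + x ⬝ᵥ (S₁ *ᵥ w) + (1/2 : ℝ) * (w ⬝ᵥ (Q₁ *ᵥ w)))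
    (hφ₂ : ∀ x w, φ₂ x w =
      (1/2 : ℝ) * (x ⬝ᵥ (P₂ *ᵥ x)) + x ⬝ᵥ (S₂ *ᵥ w) + (1/2 : ℝ) * (w ⬝ᵥ (Q₂ *ᵥ w)))
    (B₁₁ B₁₂ B₂₂ : Matrix (Fin n) (Fin n) ℝ)
    (hB₁₁ : B₁₁ = -(S₂ᵀ * (P₁ - P₂)⁻¹ * S₂) - Q₂)
    (hB₁₂ : B₁₂ = S₂ᵀ * (P₁ - P₂)⁻¹ * S₁)
    (hB₂₂ : B₂₂ = -(S₁ᵀ * (P₁ - P₂)⁻¹ * S₁) + Q₁)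
    (y z : Fin n → ℝ) :
    (∀ x : Fin n → ℝ,
        (1/2 : ℝ) * (z ⬝ᵥ (B₁₁ *ᵥ z)) + z ⬝ᵥ (B₁₂ *ᵥ y) + (1/2 : ℝ) * (y ⬝ᵥ (B₂₂ *ᵥ y))
          ≤ φ₁ x y - φ₂ x z) ∧
      φ₁ (-((P₁ - P₂)⁻¹ *ᵥ (S₁ *ᵥ y - S₂ *ᵥ z))) y
          - φ₂ (-((P₁ - P₂)⁻¹ *ᵥ (S₁ *ᵥ y - S₂ *ᵥ z))) z
        = (1/2 : ℝ) * (z ⬝ᵥ (B₁₁ *ᵥ z)) + z ⬝ᵥ (B₁₂ *ᵥ y)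
            + (1/2 : ℝ) * (y ⬝ᵥ (B₂₂ *ᵥ y)) := by
  have hA : (P₁ - P₂).IsSymm := isHermitian_iff_isSymm.mp hpd.isHermitian
  set c := S₁ *ᵥ y - S₂ *ᵥ z
  set r := (1/2 : ℝ) * (y ⬝ᵥ (Q₁ *ᵥ y)) - (1/2 : ℝ) * (z ⬝ᵥ (Q₂ *ᵥ z))
  have hdiff : ∀ x, φ₁ x y - φ₂ x z
      = (1/2 : ℝ) * (x ⬝ᵥ ((P₁ - P₂) *ᵥ x) + 2 * (x ⬝ᵥ c)) + r := by
    intro x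
    simp only [hφ₁, hφ₂, c, r, sub_mulVec, dotProduct_sub]
    ring
  have hB : (1/2 : ℝ) * (z ⬝ᵥ (B₁₁ *ᵥ z)) + z ⬝ᵥ (B₁₂ *ᵥ y) + (1/2 : ℝ) * (y ⬝ᵥ (B₂₂ *ᵥ y))
      = (1/2 : ℝ) * -(c ⬝ᵥ ((P₁ - P₂)⁻¹ *ᵥ c)) + r := by
    simp only [hB₁₁, hB₁₂, hB₂₂, c, r, hA.inv.dotProduct_sub_mulVec_sub, sub_mulVec, add_mulVec,
      neg_mulVec, dotProduct_sub, dotProduct_add, dotProduct_neg,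
      dotProduct_transpose_mul_mul_mulVec]
    ring
  refine ⟨fun x => ?_, ?_⟩
  · rw [hB, hdiff]
    linarith [hpd.neg_dotProduct_inv_mulVec_le c x]
  · rw [hB, hdiff, hA.dotProduct_mulVec_neg_inv_mulVec ((isUnit_iff_isUnit_det _).mp hpd.isUnit)]

/-- Dual-space kernel formula. With `P₁ − P₂` positive definite,
`inf_x [φ₁(x,y) − φ₂(x,z)] = ½zᵀB₁₁z + zᵀB₁₂y + ½yᵀB₂₂y` where
`B₁₁ = −S₂ᵀ(P₁−P₂)⁻¹S₂ − Q₂`, `B₁₂ = S₂ᵀ(P₁−P₂)⁻¹S₁`,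
`B₂₂ = −S₁ᵀ(P₁−P₂)⁻¹S₁ + Q₁`, attained at `x̂ = −(P₁−P₂)⁻¹(S₁y − S₂z)`. -/
theorem dual_space_kernel_formula (n : ℕ)
    (P₁ Q₁ P₂ Q₂ S₁ S₂ : Matrix (Fin n) (Fin n) ℝ)
    (hP₁ : P₁.IsSymm) (hQ₁ : Q₁.IsSymm) (hP₂ : P₂.IsSymm) (hQ₂ : Q₂.IsSymm)
    (hpd : (P₁ - P₂).PosDef)
    (φ₁ φ₂ : (Fin n → ℝ) → (Fin n → ℝ) → ℝ)
    (hφ₁ : ∀ x w, φ₁ x w =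
      (1/2 : ℝ) * (x ⬝ᵥ (P₁ *ᵥ x)) + x ⬝ᵥ (S₁ *ᵥ w) + (1/2 : ℝ) * (w ⬝ᵥ (Q₁ *ᵥ w)))
    (hφ₂ : ∀ x w, φ₂ x w =
      (1/2 : ℝ) * (x ⬝ᵥ (P₂ *ᵥ x)) + x ⬝ᵥ (S₂ *ᵥ w) + (1/2 : ℝ) * (w ⬝ᵥ (Q₂ *ᵥ w)))
    (B₁₁ B₁₂ B₂₂ : Matrix (Fin n) (Fin n) ℝ)
    (hB₁₁ : B₁₁ = -(S₂ᵀ * (P₁ - P₂)⁻¹ * S₂) - Q₂)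
    (hB₁₂ : B₁₂ = S₂ᵀ * (P₁ - P₂)⁻¹ * S₁)
    (hB₂₂ : B₂₂ = -(S₁ᵀ * (P₁ - P₂)⁻¹ * S₁) + Q₁)
    (y z : Fin n → ℝ) :
    (∀ x : Fin n → ℝ,
        (1/2 : ℝ) * (z ⬝ᵥ (B₁₁ *ᵥ z)) + z ⬝ᵥ (B₁₂ *ᵥ y) + (1/2 : ℝ) * (y ⬝ᵥ (B₂₂ *ᵥ y))
          ≤ φ₁ x y - φ₂ x z) ∧
      φ₁ (-((P₁ - P₂)⁻¹ *ᵥ (S₁ *ᵥ y - S₂ *ᵥ z))) y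
          - φ₂ (-((P₁ - P₂)⁻¹ *ᵥ (S₁ *ᵥ y - S₂ *ᵥ z))) z
        = (1/2 : ℝ) * (z ⬝ᵥ (B₁₁ *ᵥ z)) + z ⬝ᵥ (B₁₂ *ᵥ y)
            + (1/2 : ℝ) * (y ⬝ᵥ (B₂₂ *ᵥ y)) :=
  dual_space_kernel_formula_general n P₁ Q₁ P₂ Q₂ S₁ S₂ hpd φ₁ φ₂ hφ₁ hφ₂ B₁₁ B₁₂ B₂₂ hB₁₁ hB₁₂ hB₂₂
    y z
end

section
/- Leipnik's analytical solution (constancy form): Let A, C, Σ be constant n×n real matrices with C and Σ symmetric. Let P₊ and P₋ be symmetric matrices solving the algebraic Riccati equation AᵀP + PA + C + PΣP = 0, with P₋ − P₊ invertible. Let r : ℝ → (n×n real matrices) be differentiable on an interval I containing 0 with r'(t) = Aᵀr(t) + r(t)A + C + r(t)Σr(t) and r(t) − P₊ invertible for all t ∈ I. Then the matrix-valued function t ↦ exp(t(A + ΣP₊)) · [ (r(t) − P₊)⁻¹ − (P₋ − P₊)⁻¹ ] · exp(t(A + ΣP₊)ᵀ) is constant on I; in particular for all t ∈ I, exp(t(A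 + ΣP₊))[(r(t) − P₊)⁻¹ − (P₋ − P₊)⁻¹]exp(t(A + ΣP₊)ᵀ) = (r(0) − P₊)⁻¹ − (P₋ − P₊)⁻¹. -/
/-!
Shifting by the solution `P₊` turns the Riccati equation for `r` into the homogeneous one
`d' = Mᵀd + dM + dΣd` for `d = r - P₊`, `M = A + ΣP₊`, and the Bernoulli substitution `X = d⁻¹`
linearises it to `X' = -(MX + XMᵀ + Σ)`. Since `P₋ - P₊` is a constant solution of the same
homogeneous equation, `K = (P₋ - P₊)⁻¹` is a constant solution of the linear one, so `X - K`
solves `Y' = -(MY + YMᵀ)` and `exp(tM) (X - K) exp(tMᵀ)` has zero derivative.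
-/

open scoped Matrix Ring

theorem HasDerivWithinAt.ringInverse {𝕜 R : Type*} [NontriviallyNormedField 𝕜] [NormedRing R]
    [HasSummableGeomSeries R] [NormedAlgebra 𝕜 R] {d : 𝕜 → R} {d' : R} {s : Set 𝕜} {t : 𝕜}
    (hd : HasDerivWithinAt d d' s t) (ht : IsUnit (d t)) :
    HasDerivWithinAt (fun u => (d u)⁻¹ʳ) (-((d t)⁻¹ʳ * d' * (d t)⁻¹ʳ)) s t := by
  obtain ⟨u, hu⟩ := ht
  have hinv := hasFDerivAt_ringInverse (𝕜 := 𝕜) u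
  rw [hu] at hinv
  rw [← hu, Ring.inverse_unit]
  simpa [Function.comp_def] using hinv.comp_hasDerivWithinAt t hd

theorem Convex.is_const_of_hasDerivWithinAt_zero {𝕜 E : Type*} [RCLike 𝕜] [NormedAddCommGroup E]
    [NormedSpace 𝕜 E] {f : 𝕜 → E} {s : Set 𝕜} (hs : Convex ℝ s)
    (hf : ∀ t ∈ s, HasDerivWithinAt f 0 s t) {x y : 𝕜} (hx : x ∈ s) (hy : y ∈ s) :
    f x = f y := by
  have := norm_image_sub_le_of_norm_hasDerivWithin_le hf (fun _ _ => norm_zero.le) hs hy hx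
  rwa [zero_mul, norm_le_zero_iff, sub_eq_zero] at this

section RiccatiAlgebra

variable {R : Type*} [Ring R]

theorem riccati_eq_shift {A B C S P₀ : R} (h : B * P₀ + P₀ * A + C + P₀ * S * P₀ = 0) (X : R) :
    B * X + X * A + C + X * S * X
      = (B + P₀ * S) * (X - P₀) + (X - P₀) * (A + S * P₀) + (X - P₀) * S * (X - P₀) := by
  rw [← sub_zero (B * X + X * A + C + X * S * X), ← h]
  noncomm_ring

theorem inverse_mul_riccati_mul_inverse {P Q S X : R} (hX : IsUnit X) :
    X⁻¹ʳ * (Q * X + X * P + X * S * X) * X⁻¹ʳ = X⁻¹ʳ * Q + P * X⁻¹ʳ + S := by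
  have hl := Ring.inverse_mul_cancel X hX
  have hr := Ring.mul_inverse_cancel X hX
  calc X⁻¹ʳ * (Q * X + X * P + X * S * X) * X⁻¹ʳ
      = X⁻¹ʳ * Q * (X * X⁻¹ʳ) + (X⁻¹ʳ * X) * P * X⁻¹ʳ + (X⁻¹ʳ * X) * S * (X * X⁻¹ʳ) := by
        noncomm_ring
    _ = X⁻¹ʳ * Q + P * X⁻¹ʳ + S := by rw [hl, hr]; noncomm_ring

theorem lyapunov_inverse_of_riccati_eq_zero {P Q S D : R} (hD : IsUnit D)
    (h : Q * D + D * P + D * S * D = 0) : P * D⁻¹ʳ + D⁻¹ʳ * Q + S = 0 := by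
  have := inverse_mul_riccati_mul_inverse (P := P) (Q := Q) (S := S) hD
  rw [h, mul_zero, zero_mul] at this
  rw [add_comm (P * D⁻¹ʳ)]
  exact this.symm

end RiccatiAlgebra

section ExpConjugation

variable {𝕂 𝔸 : Type*} [RCLike 𝕂] [NormedRing 𝔸] [NormedAlgebra 𝕂 𝔸] [CompleteSpace 𝔸]

theorem HasDerivWithinAt.exp_smul_mul_mul_exp_smul {X : 𝕂 → 𝔸} {X' : 𝔸} {s : Set 𝕂} {t : 𝕂}
    (P Q : 𝔸) (hX : HasDerivWithinAt X X' s t) :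
    HasDerivWithinAt (fun u => NormedSpace.exp (u • P) * X u * NormedSpace.exp (u • Q))
      (NormedSpace.exp (t • P) * (P * X t + X' + X t * Q) * NormedSpace.exp (t • Q)) s t := by
  convert ((hasDerivAt_exp_smul_const P t).hasDerivWithinAt.fun_mul hX).fun_mul
    (hasDerivAt_exp_smul_const' Q t).hasDerivWithinAt using 1
  noncomm_ring

theorem HasDerivWithinAt.ringInverse_of_riccati {d : 𝕂 → 𝔸} {s : Set 𝕂} {t : 𝕂} {P Q S : 𝔸}
    (hd : HasDerivWithinAt d (Q * d t + d t * P + d t * S * d t) s t) (ht : IsUnit (d t)) :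
    HasDerivWithinAt (fun u => (d u)⁻¹ʳ) (-((d t)⁻¹ʳ * Q + P * (d t)⁻¹ʳ + S)) s t := by
  simpa only [inverse_mul_riccati_mul_inverse ht] using hd.ringInverse ht

theorem exp_smul_mul_ringInverse_sub_mul_exp_smul_eq_of_riccati {d : 𝕂 → 𝔸} {s : Set 𝕂}
    {P Q S K : 𝔸} (hs : Convex ℝ s)
    (hd : ∀ t ∈ s, HasDerivWithinAt d (Q * d t + d t * P + d t * S * d t) s t)
    (hunit : ∀ t ∈ s, IsUnit (d t)) (hK : P * K + K * Q + S = 0) {x y : 𝕂}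
    (hx : x ∈ s) (hy : y ∈ s) :
    NormedSpace.exp (x • P) * ((d x)⁻¹ʳ - K) * NormedSpace.exp (x • Q)
      = NormedSpace.exp (y • P) * ((d y)⁻¹ʳ - K) * NormedSpace.exp (y • Q) := by
  have hF0 : ∀ t ∈ s, HasDerivWithinAt
      (fun u => NormedSpace.exp (u • P) * ((d u)⁻¹ʳ - K) * NormedSpace.exp (u • Q)) 0 s t := by
    intro t ht
    have hF :=
      (((hd t ht).ringInverse_of_riccati (hunit t ht)).sub_const K).exp_smul_mul_mul_exp_smul P Q
    have hzero : P * ((d t)⁻¹ʳ - K) + -((d t)⁻¹ʳ * Q + P * (d t)⁻¹ʳ + S) + ((d t)⁻¹ʳ - K) * Q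
        = -(P * K + K * Q + S) := by noncomm_ring
    rwa [hzero, hK, neg_zero, mul_zero, zero_mul] at hF
  exact hs.is_const_of_hasDerivWithinAt_zero hF0 hx hy

end ExpConjugation

attribute [local instance] Matrix.normedAddCommGroup Matrix.normedSpace

theorem leipnik_analytic_solution_general (n : ℕ)
    (A C Sig : Matrix (Fin n) (Fin n) ℝ) (hSig : Sig.IsSymm)
    (Pp Pm : Matrix (Fin n) (Fin n) ℝ) (hPp : Pp.IsSymm)
    (hPpRic : Aᵀ * Pp + Pp * A + C + Pp * Sig * Pp = 0)
    (hPmRic : Aᵀ * Pm + Pm * A + C + Pm * Sig * Pm = 0)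
    (hdiff : IsUnit (Pm - Pp))
    (r : ℝ → Matrix (Fin n) (Fin n) ℝ) (I : Set ℝ) (hI : Convex ℝ I) (h0 : (0 : ℝ) ∈ I)
    (hr : ∀ t ∈ I, HasDerivWithinAt r
      (Aᵀ * r t + r t * A + C + r t * Sig * r t) I t)
    (hrinv : ∀ t ∈ I, IsUnit (r t - Pp)) :
    ∀ t ∈ I,
      NormedSpace.exp (t • (A + Sig * Pp))
          * ((r t - Pp)⁻¹ - (Pm - Pp)⁻¹)
          * NormedSpace.exp (t • (A + Sig * Pp)ᵀ)
        = (r 0 - Pp)⁻¹ - (Pm - Pp)⁻¹ := by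
  intro t ht
  -- The entrywise norm is not submultiplicative; the operator norm induces the same topology.
  let := Matrix.linftyOpNormedRing (n := Fin n) (α := ℝ)
  let := Matrix.linftyOpNormedAlgebra (n := Fin n) (R := ℝ) (α := ℝ)
  have : @CompleteSpace (Matrix (Fin n) (Fin n) ℝ) PseudoMetricSpace.toUniformSpace :=
    FiniteDimensional.complete ℝ _
  have hM : (A + Sig * Pp)ᵀ = Aᵀ + Pp * Sig := by
    rw [Matrix.transpose_add, Matrix.transpose_mul, hSig.eq, hPp.eq]
  have hd : ∀ t ∈ I, HasDerivWithinAt (fun u => r u - Pp)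
      ((Aᵀ + Pp * Sig) * (r t - Pp) + (r t - Pp) * (A + Sig * Pp)
        + (r t - Pp) * Sig * (r t - Pp)) I t := fun t ht =>
    riccati_eq_shift hPpRic (r t) ▸ (hr t ht).sub_const Pp
  have hK : (A + Sig * Pp) * (Pm - Pp)⁻¹ʳ + (Pm - Pp)⁻¹ʳ * (Aᵀ + Pp * Sig) + Sig = 0 :=
    lyapunov_inverse_of_riccati_eq_zero hdiff (riccati_eq_shift hPpRic Pm ▸ hPmRic)
  have hconst := exp_smul_mul_ringInverse_sub_mul_exp_smul_eq_of_riccati hI hd hrinv hK ht h0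
  rw [zero_smul, zero_smul, NormedSpace.exp_zero, one_mul, mul_one] at hconst
  simp only [hM, Matrix.nonsing_inv_eq_ringInverse]
  exact hconst

/-- Leipnik's analytical solution (constancy form). If `P₊, P₋` solve the
algebraic Riccati equation `AᵀP + PA + C + PΣP = 0` with `P₋ − P₊` invertible, and `r`
solves the forward DRE `r' = Aᵀr + rA + C + rΣr` on an interval `I ∋ 0` with `r t − P₊`
invertible, then `t ↦ exp(t(A+ΣP₊)) [(r t − P₊)⁻¹ − (P₋ − P₊)⁻¹] exp(t(A+ΣP₊)ᵀ)` is
constant on `I`, equal to its value `(r 0 − P₊)⁻¹ − (P₋ − P₊)⁻¹` at `0`. -/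
theorem leipnik_analytic_solution (n : ℕ)
    (A C Sig : Matrix (Fin n) (Fin n) ℝ) (hC : C.IsSymm) (hSig : Sig.IsSymm)
    (Pp Pm : Matrix (Fin n) (Fin n) ℝ) (hPp : Pp.IsSymm) (hPm : Pm.IsSymm)
    (hPpRic : Aᵀ * Pp + Pp * A + C + Pp * Sig * Pp = 0)
    (hPmRic : Aᵀ * Pm + Pm * A + C + Pm * Sig * Pm = 0)
    (hdiff : IsUnit (Pm - Pp))
    (r : ℝ → Matrix (Fin n) (Fin n) ℝ) (I : Set ℝ) (hI : Convex ℝ I) (h0 : (0 : ℝ) ∈ I)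
    (hr : ∀ t ∈ I, HasDerivWithinAt r
      (Aᵀ * r t + r t * A + C + r t * Sig * r t) I t)
    (hrinv : ∀ t ∈ I, IsUnit (r t - Pp)) :
    ∀ t ∈ I,
      NormedSpace.exp (t • (A + Sig * Pp))
          * ((r t - Pp)⁻¹ - (Pm - Pp)⁻¹)
          * NormedSpace.exp (t • (A + Sig * Pp)ᵀ)
        = (r 0 - Pp)⁻¹ - (Pm - Pp)⁻¹ :=
  leipnik_analytic_solution_general n A C Sig hSig Pp Pm hPp hPpRic hPmRic hdiff r I hI h0 hr hrinv
end

section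
/- Duality of algebraic Riccati equation solutions: Let A, Σ, C, Ā, Σ̄, C̄, P, S, Q be n×n real matrices with Σ, C, Σ̄, C̄, P, Q symmetric and S invertible, satisfying the time-invariant matching conditions AᵀP + PA + C + PΣP = SΣ̄Sᵀ, (A + ΣP)ᵀS = S(−Ā + Σ̄Q), and SᵀΣS = −ĀᵀQ − QĀ + C̄ + QΣ̄Q. Suppose p̂ is a symmetric n×n matrix with Aᵀp̂ + p̂A + C + p̂Σp̂ = 0 and p̂ − P invertible. Then q̂ := −Sᵀ(p̂ − P)⁻¹S − Q satisfies the dual algebraic Riccati equation Āᵀq̂ + q̂Ā + C̄ + q̂Σ̄q̂ = 0. -/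
open scoped Matrix

/-! Write `R = p̂ - P`. Expanding the primal Riccati operator around `P` and using the first
matching condition turns the primal equation into a Riccati equation for `R` with drift
`A + ΣP`, constant term `SΣ̄Sᵀ` and quadratic coefficient `Σ`. Conjugating it by `R⁻¹S` and
using the second matching condition to move the drift across `S` gives a Riccati equation for
`M = SᵀR⁻¹S` in which the constant and quadratic coefficients have traded places: constant
`SᵀΣS`, quadratic coefficient `Σ̄`. By the third matching condition this is exactly the dual
Riccati operator expanded around `-Q`, evaluated at `-M - Q = q̂`. -/

namespace Matrix

variable {ι α : Type*} [Fintype ι] [CommRing α]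

def riccati (A C Sig X : Matrix ι ι α) : Matrix ι ι α :=
  Aᵀ * X + X * A + C + X * Sig * X

theorem riccati_neg (A C Sig X : Matrix ι ι α) :
    riccati A C Sig (-X) = riccati (-A) C Sig X := by
  simp only [riccati, transpose_neg, neg_mul, mul_neg, neg_neg]

theorem riccati_add {Sig P : Matrix ι ι α} (hSig : Sig.IsSymm) (hP : P.IsSymm)
    (A C R : Matrix ι ι α) :
    riccati A C Sig (P + R) = riccati (A + Sig * P) (riccati A C Sig P) Sig R := by
  simp only [riccati, transpose_add, transpose_mul, hSig.eq, hP.eq]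
  noncomm_ring

theorem riccati_conj_inv [DecidableEq ι] {R S X Y : Matrix ι ι α} (hR : IsUnit R)
    (hXY : Xᵀ * S = S * Y) (Sig Sig' : Matrix ι ι α) :
    Sᵀ * R⁻¹ * riccati X (S * Sig' * Sᵀ) Sig R * R⁻¹ * S
      = riccati Y (Sᵀ * Sig * S) Sig' (Sᵀ * R⁻¹ * S) := by
  have hRR : R * R⁻¹ = 1 := mul_nonsing_inv R ((isUnit_iff_isUnit_det R).mp hR)
  have hRR' : R⁻¹ * R = 1 := nonsing_inv_mul R ((isUnit_iff_isUnit_det R).mp hR)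
  have hYX : Sᵀ * X = Yᵀ * Sᵀ := by
    simpa only [transpose_mul, transpose_transpose] using congrArg transpose hXY
  calc Sᵀ * R⁻¹ * riccati X (S * Sig' * Sᵀ) Sig R * R⁻¹ * S
      = Sᵀ * R⁻¹ * Xᵀ * (R * R⁻¹) * S + Sᵀ * (R⁻¹ * R) * X * R⁻¹ * S
          + Sᵀ * R⁻¹ * S * Sig' * (Sᵀ * R⁻¹ * S) + Sᵀ * (R⁻¹ * R) * Sig * (R * R⁻¹) * S := by
        simp only [riccati]; noncomm_ring
    _ = Sᵀ * R⁻¹ * (Xᵀ * S) + Sᵀ * X * R⁻¹ * S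
          + Sᵀ * R⁻¹ * S * Sig' * (Sᵀ * R⁻¹ * S) + Sᵀ * Sig * S := by
        simp only [hRR, hRR', mul_one, mul_assoc]
    _ = riccati Y (Sᵀ * Sig * S) Sig' (Sᵀ * R⁻¹ * S) := by
        rw [hXY, hYX, riccati]; noncomm_ring

end Matrix

open Matrix in
theorem duality_of_ARE_solutions_general (n : ℕ)
    (A Sig C Abar Sigbar Cbar P S Q : Matrix (Fin n) (Fin n) ℝ)
    (hSig : Sig.IsSymm) (hSigbar : Sigbar.IsSymm)
    (hP : P.IsSymm) (hQ : Q.IsSymm)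
    (hmatch1 : Aᵀ * P + P * A + C + P * Sig * P = S * Sigbar * Sᵀ)
    (hmatch2 : (A + Sig * P)ᵀ * S = S * (-Abar + Sigbar * Q))
    (hmatch3 : Sᵀ * Sig * S = -(Abarᵀ * Q) - Q * Abar + Cbar + Q * Sigbar * Q)
    (phat : Matrix (Fin n) (Fin n) ℝ)
    (hphatRic : Aᵀ * phat + phat * A + C + phat * Sig * phat = 0)
    (hinv : IsUnit (phat - P))
    (qhat : Matrix (Fin n) (Fin n) ℝ)
    (hqhat : qhat = -(Sᵀ * (phat - P)⁻¹ * S) - Q) :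
    Abarᵀ * qhat + qhat * Abar + Cbar + qhat * Sigbar * qhat = 0 := by
  set M := Sᵀ * (phat - P)⁻¹ * S
  have hprimal : riccati (A + Sig * P) (S * Sigbar * Sᵀ) Sig (phat - P) = 0 := by
    have hP1 : riccati A C Sig P = S * Sigbar * Sᵀ := hmatch1
    rw [← hP1, ← riccati_add hSig hP, add_sub_cancel]
    exact hphatRic
  have hdualQ : riccati (-Abar) Cbar Sigbar Q = Sᵀ * Sig * S := by
    rw [hmatch3, riccati, transpose_neg, neg_mul, mul_neg, ← sub_eq_add_neg]
  change riccati Abar Cbar Sigbar qhat = 0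
  calc riccati Abar Cbar Sigbar qhat
      = riccati (-Abar) Cbar Sigbar (Q + M) := by
        rw [hqhat, ← riccati_neg, neg_add, neg_sub_comm, sub_eq_add_neg]
    _ = riccati (-Abar + Sigbar * Q) (Sᵀ * Sig * S) Sigbar M := by
        rw [riccati_add hSigbar hQ, hdualQ]
    _ = 0 := by
        rw [← riccati_conj_inv hinv hmatch2, hprimal, mul_zero, zero_mul, zero_mul]

/-- Duality of algebraic Riccati equation solutions. Under the
time-invariant kernel matching conditions for `(A, C, Σ)`, `(P, S, Q)` and
`(Ā, C̄, Σ̄)`, if `p̂` solves the primal algebraic Riccati equation with `p̂ − P`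
invertible, then `q̂ = −Sᵀ(p̂−P)⁻¹S − Q` solves the dual algebraic Riccati equation. -/
theorem duality_of_ARE_solutions (n : ℕ)
    (A Sig C Abar Sigbar Cbar P S Q : Matrix (Fin n) (Fin n) ℝ)
    (hSig : Sig.IsSymm) (hC : C.IsSymm) (hSigbar : Sigbar.IsSymm) (hCbar : Cbar.IsSymm)
    (hP : P.IsSymm) (hQ : Q.IsSymm) (hS : IsUnit S)
    (hmatch1 : Aᵀ * P + P * A + C + P * Sig * P = S * Sigbar * Sᵀ)
    (hmatch2 : (A + Sig * P)ᵀ * S = S * (-Abar + Sigbar * Q))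
    (hmatch3 : Sᵀ * Sig * S = -(Abarᵀ * Q) - Q * Abar + Cbar + Q * Sigbar * Q)
    (phat : Matrix (Fin n) (Fin n) ℝ) (hphat : phat.IsSymm)
    (hphatRic : Aᵀ * phat + phat * A + C + phat * Sig * phat = 0)
    (hinv : IsUnit (phat - P))
    (qhat : Matrix (Fin n) (Fin n) ℝ)
    (hqhat : qhat = -(Sᵀ * (phat - P)⁻¹ * S) - Q) :
    Abarᵀ * qhat + qhat * Abar + Cbar + qhat * Sigbar * qhat = 0 :=
  duality_of_ARE_solutions_general n A Sig C Abar Sigbar Cbar P S Q hSig hSigbar hP hQ hmatch1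
    hmatch2 hmatch3 phat hphatRic hinv qhat hqhat
end
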